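/- The box of Example 2 admits no LHV-LHS decomposition with hidden variable dimension 2 of the form P(ab|xy) = q·P_D^{α₀β₀}(a|x)Q₀(b|y) + (1-q)·P_D^{α₁β₁}(a|x)Q₁(b|y) with deterministic Alice boxes and arbitrary single-party distributions Q₀, Q₁: for every choice of two deterministic Alice boxes and weight q ∈ (0,1), some entry of the box cannot be matched. -/

import Mathlib

open Finset

/-- The box of Example 2. -/
noncomputable def PEx2 (a b x y : Fin 2) : ℝ :=
  if x = y then (if a = 0 ∧ b = 0 then 5 / 8 else 1 / 8)
  else (if a = 0 ∧ b = 0 then 1 / 2 else if a = 1 ∧ b = 1 then 0 else 1 / 4)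

/-- Single-party deterministic box P_D^{αβ}. -/
def PD (α β : Fin 2) (a x : Fin 2) : ℝ :=
  if a = α * x + β then 1 else 0

/-! Fix Bob's setting `y = 0` and outcome `b = 0`. The remaining entries `x, a ↦ P(a 0 | x 0)`
form a mixture `w₀ · P_D^{α₀β₀}(a|x) + w₁ · P_D^{α₁β₁}(a|x)` of two deterministic responses, so
for each `x` the product of the entries with `a = 0` and `a = 1` is `w₀ w₁` when the two responses
differ and `0` when they agree. In the box this product is `5/64` for `x = 0` and `1/8` for
`x = 1`: both nonzero, yet different. -/

theorem PD_mix_zero_mul_PD_mix_one (w₀ w₁ : ℝ) (α₀ β₀ α₁ β₁ x : Fin 2) :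
    (w₀ * PD α₀ β₀ 0 x + w₁ * PD α₁ β₁ 0 x) * (w₀ * PD α₀ β₀ 1 x + w₁ * PD α₁ β₁ 1 x) =
      if α₀ * x + β₀ = α₁ * x + β₁ then 0 else w₀ * w₁ := by
  unfold PD
  generalize α₀ * x + β₀ = c₀
  generalize α₁ * x + β₁ = c₁
  fin_cases c₀ <;> fin_cases c₁ <;> simp [mul_comm]

/-- The Example 2 box admits no dimension-2 LHV-LHS decomposition with deterministic
Alice boxes and arbitrary single-party distributions on Bob's side. -/
theorem ex2_no_dim2_decomposition :
    ¬ ∃ (q : ℝ) (α₀ β₀ α₁ β₁ : Fin 2) (Q₀ Q₁ : Fin 2 → Fin 2 → ℝ),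
        0 < q ∧ q < 1 ∧
        (∀ y b, 0 ≤ Q₀ y b) ∧ (∀ y, ∑ b : Fin 2, Q₀ y b = 1) ∧
        (∀ y b, 0 ≤ Q₁ y b) ∧ (∀ y, ∑ b : Fin 2, Q₁ y b = 1) ∧
        (∀ a b x y : Fin 2,
          PEx2 a b x y
            = q * PD α₀ β₀ a x * Q₀ y b + (1 - q) * PD α₁ β₁ a x * Q₁ y b) := by
  rintro ⟨q, α₀, β₀, α₁, β₁, Q₀, Q₁, -, -, -, -, -, -, h⟩
  have entry (a x : Fin 2) :
      PEx2 a 0 x 0 = q * Q₀ 0 0 * PD α₀ β₀ a x + (1 - q) * Q₁ 0 0 * PD α₁ β₁ a x := by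
    rw [h]; ring
  have prod (x : Fin 2) : PEx2 0 0 x 0 * PEx2 1 0 x 0 =
      if α₀ * x + β₀ = α₁ * x + β₁ then 0 else q * Q₀ 0 0 * ((1 - q) * Q₁ 0 0) := by
    rw [entry, entry]
    exact PD_mix_zero_mul_PD_mix_one _ _ α₀ β₀ α₁ β₁ x
  have prod₀ := prod 0
  have prod₁ := prod 1
  norm_num [PEx2] at prod₀ prod₁
  split_ifs at prod₀ prod₁ <;> linarith
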